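/- arXiv:1202.6663 — 2 statements merged into one kernel-verified Lean document; each statement's English description precedes it below -/
import Mathlib

section
/- Let n ≥ r ≥ 1 be integers and let P ⊂ ℝⁿ be a lattice polytope. Then the following are equivalent: (i) there exist a ℤ-affine isomorphism T : ℝⁿ → ℝ^(n−r) × ℝʳ (i.e. T(x) = Ax + b with A ∈ GL_n(ℤ) and b ∈ ℤⁿ, under the standard identification ℝ^(n−r) × ℝʳ ≅ ℝⁿ) and lattice polytopes P₀, …, P_r ⊂ ℝ^(n−r) such that T(P) equals the Cayley sum P₀ * ⋯ * P_r; (ii) some lattice projection ℝⁿ → ℝʳ maps P onto a unimodular r-simplex. -/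
/-!
Projecting onto the last `r` coordinates maps a Cayley sum onto the corner simplex
`conv{0, e₁, …, e_r}`. Conversely, suppose this projection maps a lattice polytope onto the
corner simplex. A lattice point of the simplex is a vertex, so each of the lattice points
generating the polytope lies over a vertex; grouping them by that vertex exhibits the polytope
as a Cayley sum, and no group is empty because the vertices of a simplex are convexly
independent.

To pass between the two formulations, note that a surjection `ℤⁿ → ℤʳ` splits, so every
lattice projection is the last block of rows of a matrix in `GLₙ(ℤ)`.
-/

open Set Function

noncomputable section

/-- The real vector with the same coordinates as an integer vector. -/
def toRealVec {n : ℕ} (u : Fin n → ℤ) : Fin n → ℝ := fun i => (u i : ℝ)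

/-- A lattice polytope in `ℝⁿ` is the convex hull of finitely many points of `ℤⁿ`. -/
def IsLatticePolytope {n : ℕ} (P : Set (Fin n → ℝ)) : Prop :=
  ∃ S : Finset (Fin n → ℤ), S.Nonempty ∧ P = convexHull ℝ (↑(S.image toRealVec))

/-- The `ℝ`-linear map `ℝⁿ → ℝᵐ` induced by an integer matrix. -/
def realMap {m n : ℕ} (A : Matrix (Fin m) (Fin n) ℤ) : (Fin n → ℝ) → (Fin m → ℝ) :=
  fun x => (A.map (fun z : ℤ => (z : ℝ))).mulVec x

/-- A unimodular `r`-simplex in `ℝʳ`: a lattice translate of `conv{0, e₁, …, e_r}`. -/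
def IsUnimodularSimplex {r : ℕ} (S : Set (Fin r → ℝ)) : Prop :=
  ∃ v : Fin r → ℤ,
    S = (fun x => toRealVec v + x) ''
      convexHull ℝ (insert 0 (Set.range fun i : Fin r => Pi.single i (1 : ℝ)))

/-- The point of `ℝⁿ` obtained by juxtaposing `p ∈ ℝ^(n-r)` and `q ∈ ℝʳ`
(under the standard identification `ℝ^(n-r) × ℝʳ ≅ ℝⁿ`, assuming `r ≤ n`). -/
def juxtapose {n r : ℕ} (h : r ≤ n) (p : Fin (n - r) → ℝ) (q : Fin r → ℝ) : Fin n → ℝ :=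
  fun i => Sum.elim p q (finSumFinEquiv.symm (Fin.cast (Nat.sub_add_cancel h).symm i))

/-- The vertices `0, e₁, …, e_r` of the standard unimodular `r`-simplex,
indexed by `Fin (r+1)`. -/
def cayleyVert {r : ℕ} : Fin (r + 1) → (Fin r → ℝ) :=
  Fin.cases 0 (fun i => Pi.single i 1)

/-- The Cayley sum `P₀ * ⋯ * P_r ⊆ ℝ^(n-r) × ℝʳ ≅ ℝⁿ` of lattice polytopes
`P₀, …, P_r ⊆ ℝ^(n-r)`: the convex hull of `(P₀ × 0) ∪ (P₁ × e₁) ∪ ⋯ ∪ (P_r × e_r)`. -/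
def cayleySum {n r : ℕ} (h : r ≤ n) (Q : Fin (r + 1) → Set (Fin (n - r) → ℝ)) :
    Set (Fin n → ℝ) :=
  convexHull ℝ (⋃ k : Fin (r + 1), (fun p => juxtapose h p (cayleyVert k)) '' Q k)

theorem convexHull_iUnion_convexHull {𝕜 E ι : Type*} [Semiring 𝕜] [PartialOrder 𝕜]
    [AddCommMonoid E] [Module 𝕜 E] (s : ι → Set E) :
    convexHull 𝕜 (⋃ i, convexHull 𝕜 (s i)) = convexHull 𝕜 (⋃ i, s i) :=
  (convexHull_min (iUnion_subset fun i => convexHull_mono (subset_iUnion s i))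
    (convex_convexHull 𝕜 _)).antisymm
    (convexHull_mono (iUnion_mono fun _ => subset_convexHull 𝕜 _))

theorem LinearMap.exists_linearEquiv_apply_inr_eq {R ι μ κ : Type*} [CommRing R] [IsDomain R]
    [IsPrincipalIdealRing R] [Fintype ι] [Fintype μ] [Fintype κ] (e : ι ≃ μ ⊕ κ)
    (f : (ι → R) →ₗ[R] (κ → R)) (hf : Surjective f) :
    ∃ α : (ι → R) ≃ₗ[R] (ι → R), ∀ x j, α x (e.symm (.inr j)) = f x j := by
  -- `f` splits, and over a PID its kernel is free, necessarily of rank `card μ`.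
  obtain ⟨g, hg⟩ := Module.projective_lifting_property f LinearMap.id hf
  obtain ⟨ψ, hψ⟩ := (LinearMap.exact_subtype_ker_map f).splitSurjectiveEquiv
    (Submodule.injective_subtype _) ⟨g, hg⟩
  have hrank : Module.finrank R (LinearMap.ker f) = Fintype.card μ := by
    have := ψ.finrank_eq
    simp only [Module.finrank_prod, Module.finrank_fintype_fun_eq_card,
      Fintype.card_congr e, Fintype.card_sum] at this
    omega
  let bas := (Module.finBasisOfFinrankEq R _ hrank).reindex (Fintype.equivFin μ).symm
  refine ⟨ψ ≪≫ₗ bas.equivFun.prodCongr (LinearEquiv.refl R _) ≪≫ₗ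
    (LinearEquiv.sumArrowLequivProdArrow μ κ R R).symm ≪≫ₗ
    LinearEquiv.funCongrLeft R R e, fun x j => ?_⟩
  simp [hψ.2, LinearEquiv.funCongrLeft_apply]

theorem Matrix.exists_isUnit_det_apply_inr_eq {R ι μ κ : Type*} [CommRing R] [IsDomain R]
    [IsPrincipalIdealRing R] [Fintype ι] [Fintype μ] [Fintype κ] [DecidableEq ι]
    (e : ι ≃ μ ⊕ κ) (B : Matrix κ ι R) (hB : Surjective B.mulVec) :
    ∃ A : Matrix ι ι R, IsUnit A.det ∧ ∀ j, A (e.symm (.inr j)) = B j := by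
  obtain ⟨α, hα⟩ := B.mulVecLin.exists_linearEquiv_apply_inr_eq e hB
  refine ⟨LinearMap.toMatrix' α, by simpa [LinearMap.det_toMatrix'] using α.isUnit_det',
    fun j => funext fun i => ?_⟩
  simp [LinearMap.toMatrix'_apply, hα]

section

variable {n r : ℕ}

lemma range_cayleyVert :
    range (cayleyVert (r := r)) = insert 0 (range fun i : Fin r => Pi.single i (1 : ℝ)) :=
  Fin.range_cons _ _

def cornerSimplex (r : ℕ) : Set (Fin r → ℝ) := convexHull ℝ (range cayleyVert)

lemma isUnimodularSimplex_iff {S : Set (Fin r → ℝ)} :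
    IsUnimodularSimplex S ↔ ∃ v : Fin r → ℤ, S = (toRealVec v + ·) '' cornerSimplex r := by
  rw [IsUnimodularSimplex, cornerSimplex, range_cayleyVert]

-- The barycentric coordinates with respect to the vertices `0, e₁, …, e_r`.
def cornerCoord (k : Fin (r + 1)) : (Fin r → ℝ) →ᵃ[ℝ] ℝ :=
  Fin.cases
    (AffineMap.const ℝ _ 1 - (∑ i, LinearMap.proj i : (Fin r → ℝ) →ₗ[ℝ] ℝ).toAffineMap)
    (fun i => (LinearMap.proj i : (Fin r → ℝ) →ₗ[ℝ] ℝ).toAffineMap) k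

@[simp] lemma cornerCoord_zero (x : Fin r → ℝ) : cornerCoord 0 x = 1 - ∑ i, x i := by
  simp [cornerCoord]

@[simp] lemma cornerCoord_succ (i : Fin r) (x : Fin r → ℝ) : cornerCoord i.succ x = x i := rfl

lemma cornerCoord_cayleyVert (k j : Fin (r + 1)) :
    cornerCoord k (cayleyVert j) = if j = k then 1 else 0 := by
  cases k using Fin.cases <;> cases j using Fin.cases <;>
    simp [cayleyVert, Pi.single_apply, eq_comm]

lemma sum_cornerCoord (x : Fin r → ℝ) : ∑ k, cornerCoord k x = 1 := by
  simp [Fin.sum_univ_succ]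

lemma sum_cornerCoord_smul_cayleyVert (x : Fin r → ℝ) :
    ∑ k, cornerCoord k x • cayleyVert k = x := by
  simpa [Fin.sum_univ_succ, cayleyVert] using (pi_eq_sum_univ' x).symm

lemma cornerCoord_nonneg {x : Fin r → ℝ} (hx : x ∈ cornerSimplex r) (k : Fin (r + 1)) :
    0 ≤ cornerCoord k x := by
  refine convexHull_min ?_ ((convex_Ici 0).affine_preimage (cornerCoord k)) hx
  rintro _ ⟨j, rfl⟩
  simp only [mem_preimage, mem_Ici, cornerCoord_cayleyVert]
  split_ifs <;> norm_num

lemma convexIndependent_cayleyVert : ConvexIndependent ℝ (cayleyVert (r := r)) := by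
  intro s k hk
  by_contra hks
  have hle : convexHull ℝ (cayleyVert '' s) ⊆ cornerCoord k ⁻¹' Iic 0 := by
    refine convexHull_min ?_ ((convex_Iic 0).affine_preimage (cornerCoord k))
    rintro _ ⟨j, hj, rfl⟩
    simp [cornerCoord_cayleyVert, show j ≠ k from fun h => hks (h ▸ hj)]
  exact absurd (hle hk) (by simp [cornerCoord_cayleyVert])

lemma exists_cayleyVert_eq_of_mem_cornerSimplex {u : Fin r → ℤ}
    (hu : toRealVec u ∈ cornerSimplex r) : ∃ k, cayleyVert k = toRealVec u := by
  -- The barycentric coordinates of `u` are integers, nonnegative and summing to `1`.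
  set c := fun k => cornerCoord k (toRealVec u)
  have hc : ∀ k, 0 ≤ c k := cornerCoord_nonneg hu
  have hsum : ∑ k, c k = 1 := sum_cornerCoord _
  obtain ⟨k, -, hk⟩ := Finset.exists_ne_zero_of_sum_ne_zero (hsum.trans_ne one_ne_zero)
  obtain ⟨m, hm⟩ : ∃ m : ℤ, c k = m := by
    cases k using Fin.cases
    · exact ⟨1 - ∑ i, u i, by simp [c, toRealVec]⟩
    · exact ⟨_, rfl⟩
  have hk1 : c k = 1 := by
    have hm0 : 0 < m := by exact_mod_cast hm ▸ (hc k).lt_of_ne (Ne.symm hk)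
    refine le_antisymm (hsum ▸ Finset.single_le_sum (fun i _ => hc i) (Finset.mem_univ k)) ?_
    rw [hm]
    exact_mod_cast hm0
  have hzero : ∀ j ≠ k, c j = 0 := fun j hj => by
    have := Finset.add_le_sum (fun i _ => hc i) (Finset.mem_univ j) (Finset.mem_univ k) hj
    linarith [hc j]
  refine ⟨k, ?_⟩
  calc cayleyVert k = ∑ j, c j • cayleyVert j := by
        rw [Finset.sum_eq_single_of_mem k (Finset.mem_univ k) fun j _ hj => by
          rw [hzero j hj, zero_smul], hk1, one_smul]
    _ = toRealVec u := sum_cornerCoord_smul_cayleyVert _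

def splitIdx (h : r ≤ n) : Fin n ≃ Fin (n - r) ⊕ Fin r :=
  (finCongr (Nat.sub_add_cancel h).symm).trans finSumFinEquiv.symm

def fstIdx (h : r ≤ n) (a : Fin (n - r)) : Fin n := (splitIdx h).symm (.inl a)

def sndIdx (h : r ≤ n) (j : Fin r) : Fin n := (splitIdx h).symm (.inr j)

lemma sndIdx_injective (h : r ≤ n) : Injective (sndIdx h) :=
  (splitIdx h).symm.injective.comp Sum.inr_injective

lemma juxtapose_apply (h : r ≤ n) (p : Fin (n - r) → ℝ) (q : Fin r → ℝ) (i : Fin n) :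
    juxtapose h p q i = Sum.elim p q (splitIdx h i) := rfl

@[simp] lemma juxtapose_sndIdx (h : r ≤ n) (p : Fin (n - r) → ℝ) (q : Fin r → ℝ) (j) :
    juxtapose h p q (sndIdx h j) = q j := by
  simp [juxtapose_apply, sndIdx]

lemma juxtapose_comp_fstIdx_comp_sndIdx (h : r ≤ n) (x : Fin n → ℝ) :
    juxtapose h (x ∘ fstIdx h) (x ∘ sndIdx h) = x := by
  funext i
  obtain ⟨a | j, rfl⟩ := (splitIdx h).symm.surjective i <;>
    simp [juxtapose_apply, fstIdx, sndIdx]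

def juxtaposeAffine (h : r ≤ n) (q : Fin r → ℝ) :
    (Fin (n - r) → ℝ) →ᵃ[ℝ] (Fin n → ℝ) where
  toFun p := juxtapose h p q
  linear := LinearMap.funLeft ℝ ℝ (splitIdx h) ∘ₗ
    (LinearEquiv.sumArrowLequivProdArrow _ _ ℝ ℝ).symm.toLinearMap ∘ₗ LinearMap.inl ℝ _ _
  map_vadd' p v := by
    funext i
    obtain ⟨a | j, rfl⟩ := (splitIdx h).symm.surjective i <;> simp [juxtapose_apply]

lemma juxtapose_image_convexHull (h : r ≤ n) (q : Fin r → ℝ) (s : Set (Fin (n - r) → ℝ)) :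
    (fun p => juxtapose h p q) '' convexHull ℝ s =
      convexHull ℝ ((fun p => juxtapose h p q) '' s) :=
  (juxtaposeAffine h q).image_convexHull s

def projSnd (h : r ≤ n) : (Fin n → ℝ) →ₗ[ℝ] (Fin r → ℝ) :=
  LinearMap.funLeft ℝ ℝ (sndIdx h)

@[simp] lemma projSnd_juxtapose (h : r ≤ n) (p : Fin (n - r) → ℝ) (q : Fin r → ℝ) :
    projSnd h (juxtapose h p q) = q := by
  funext j; simp [projSnd]

@[simp] lemma toRealVec_add (u w : Fin n → ℤ) :
    toRealVec (u + w) = toRealVec u + toRealVec w := by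
  funext i; simp [toRealVec]

@[simp] lemma toRealVec_neg (u : Fin n → ℤ) : toRealVec (-u) = -toRealVec u := by
  funext i; simp [toRealVec]

lemma IsLatticePolytope.nonempty {P : Set (Fin n → ℝ)} (hP : IsLatticePolytope P) :
    P.Nonempty := by
  obtain ⟨S, hS, rfl⟩ := hP
  exact (hS.image _).to_set.convexHull

lemma realMap_toRealVec {m : ℕ} (A : Matrix (Fin m) (Fin n) ℤ) (u : Fin n → ℤ) :
    realMap A (toRealVec u) = toRealVec (A.mulVec u) := by
  funext i
  simp [realMap, toRealVec, Matrix.mulVec, dotProduct]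

lemma image_convexHull_toRealVec {m : ℕ} (A : Matrix (Fin m) (Fin n) ℤ) (b : Fin m → ℤ)
    (S : Finset (Fin n → ℤ)) :
    (fun x => realMap A x + toRealVec b) '' convexHull ℝ ↑(S.image toRealVec) =
      convexHull ℝ ↑((S.image fun u => A.mulVec u + b).image toRealVec) := by
  let T := (A.map ((↑) : ℤ → ℝ)).mulVecLin.toAffineMap + AffineMap.const ℝ _ (toRealVec b)
  rw [show (fun x => realMap A x + toRealVec b) = T from rfl, T.image_convexHull]
  simp only [Finset.coe_image, image_image, toRealVec_add, ← realMap_toRealVec]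
  rfl

lemma projSnd_image_image_realMap_add (h : r ≤ n) (A : Matrix (Fin n) (Fin n) ℤ) (b : Fin n → ℤ)
    (P : Set (Fin n → ℝ)) :
    projSnd h '' ((fun x => realMap A x + toRealVec b) '' P) =
      (· + toRealVec (b ∘ sndIdx h)) '' (realMap (A.submatrix (sndIdx h) id) '' P) := by
  simp only [image_image]
  rfl

lemma projSnd_image_cayleySum (h : r ≤ n) {Q : Fin (r + 1) → Set (Fin (n - r) → ℝ)}
    (hQ : ∀ k, (Q k).Nonempty) : projSnd h '' cayleySum h Q = cornerSimplex r := by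
  rw [cayleySum, (projSnd h).image_convexHull, image_iUnion, cornerSimplex,
    ← iUnion_singleton_eq_range]
  congr! with k
  rw [image_image]
  simp only [projSnd_juxtapose]
  exact (hQ k).image_const _

lemma projSnd_toRealVec (h : r ≤ n) (u : Fin n → ℤ) :
    projSnd h (toRealVec u) = toRealVec (u ∘ sndIdx h) := rfl

lemma juxtapose_toRealVec_of_projSnd_eq (h : r ≤ n) {u : Fin n → ℤ} {k : Fin (r + 1)}
    (hu : projSnd h (toRealVec u) = cayleyVert k) :
    juxtapose h (toRealVec (u ∘ fstIdx h)) (cayleyVert k) = toRealVec u := by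
  rw [← hu]
  exact juxtapose_comp_fstIdx_comp_sndIdx h (toRealVec u)

theorem exists_eq_cayleySum (h : r ≤ n) (S : Finset (Fin n → ℤ))
    (hS : projSnd h '' convexHull ℝ ↑(S.image toRealVec) = cornerSimplex r) :
    ∃ Q : Fin (r + 1) → Set (Fin (n - r) → ℝ), (∀ k, IsLatticePolytope (Q k)) ∧
      convexHull ℝ ↑(S.image toRealVec) = cayleySum h Q := by
  classical
  let fiber k := S.filter fun u => projSnd h (toRealVec u) = cayleyVert k
  have hvert : ∀ u ∈ S, ∃ k, cayleyVert k = projSnd h (toRealVec u) := by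
    intro u hu
    refine exists_cayleyVert_eq_of_mem_cornerSimplex (u := u ∘ sndIdx h) ?_
    rw [← projSnd_toRealVec, ← hS]
    exact mem_image_of_mem _ (subset_convexHull ℝ _ (by simpa using ⟨u, hu, rfl⟩))
  have hfiber : ∀ k, (fiber k).Nonempty := by
    intro k
    have hproj : projSnd h '' ↑(S.image toRealVec) = cayleyVert '' {k | (fiber k).Nonempty} := by
      ext x
      simp only [Finset.coe_image, image_image, mem_image, Finset.mem_coe, mem_ofPred_eq,
        Finset.Nonempty, Finset.mem_filter, fiber]
      constructor
      · rintro ⟨u, hu, rfl⟩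
        obtain ⟨k, hk⟩ := hvert u hu
        exact ⟨k, ⟨u, hu, hk.symm⟩, hk⟩
      · rintro ⟨k, ⟨u, hu, hk⟩, rfl⟩
        exact ⟨u, hu, hk⟩
    have hk : cayleyVert k ∈ convexHull ℝ (cayleyVert '' {k | (fiber k).Nonempty}) := by
      rw [← hproj, ← (projSnd h).image_convexHull, hS]
      exact subset_convexHull ℝ _ ⟨k, rfl⟩
    exact convexIndependent_cayleyVert _ _ hk
  refine ⟨fun k => convexHull ℝ ↑(((fiber k).image (· ∘ fstIdx h)).image toRealVec),
    fun k => ⟨_, (hfiber k).image _, rfl⟩, ?_⟩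
  simp only [cayleySum, juxtapose_image_convexHull, convexHull_iUnion_convexHull]
  congr 1
  have hS_eq : (S : Set (Fin n → ℤ)) = ⋃ k, ↑(fiber k) := by
    ext u
    simp only [mem_iUnion, Finset.mem_coe, Finset.mem_filter, fiber]
    exact ⟨fun hu => (hvert u hu).imp fun k hk => ⟨hu, hk.symm⟩, fun ⟨_, hu, _⟩ => hu⟩
  rw [Finset.coe_image, hS_eq, image_iUnion]
  refine iUnion_congr fun k => ?_
  rw [Finset.coe_image, Finset.coe_image, image_image, image_image]
  exact image_congr fun u hu =>
    (juxtapose_toRealVec_of_projSnd_eq h (Finset.mem_filter.1 hu).2).symm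

end

theorem cayley_sum_iff_lattice_projection_general (n r : ℕ) (hrn : r ≤ n)
    (P : Set (Fin n → ℝ)) (hP : IsLatticePolytope P) :
    (∃ (A : Matrix (Fin n) (Fin n) ℤ) (b : Fin n → ℤ), IsUnit A.det ∧
      ∃ Q : Fin (r + 1) → Set (Fin (n - r) → ℝ), (∀ k, IsLatticePolytope (Q k)) ∧
        (fun x => realMap A x + toRealVec b) '' P = cayleySum hrn Q) ↔
    (∃ B : Matrix (Fin r) (Fin n) ℤ,
      Surjective (B.mulVec : (Fin n → ℤ) → (Fin r → ℤ)) ∧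
      IsUnimodularSimplex (realMap B '' P)) := by
  constructor
  · rintro ⟨A, b, hA, Q, hQ, hTP⟩
    have hAsurj : Surjective A.mulVec :=
      A.mulVec_surjective_iff_isUnit.2 (A.isUnit_iff_isUnit_det.2 hA)
    refine ⟨A.submatrix (sndIdx hrn) id, (sndIdx_injective hrn).surjective_comp_right.comp hAsurj,
      isUnimodularSimplex_iff.2 ⟨-(b ∘ sndIdx hrn), ?_⟩⟩
    rw [← projSnd_image_cayleySum hrn fun k => (hQ k).nonempty, ← hTP,
      projSnd_image_image_realMap_add, image_image]
    simp
  · rintro ⟨B, hB, hBP⟩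
    obtain ⟨v, hv⟩ := isUnimodularSimplex_iff.1 hBP
    obtain ⟨A, hA, hAB⟩ := Matrix.exists_isUnit_det_apply_inr_eq (splitIdx hrn) B hB
    obtain ⟨b, hb : b ∘ sndIdx hrn = -v⟩ := (sndIdx_injective hrn).surjective_comp_right (-v)
    obtain ⟨S, -, rfl⟩ := hP
    refine ⟨A, b, hA, ?_⟩
    rw [image_convexHull_toRealVec]
    apply exists_eq_cayleySum
    rw [← image_convexHull_toRealVec, projSnd_image_image_realMap_add,
      show A.submatrix (sndIdx hrn) id = B from funext hAB, hv, hb, image_image]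
    simp

/-- For a lattice polytope `P ⊆ ℝⁿ` and `n ≥ r ≥ 1`, the following are
equivalent: (i) some `ℤ`-affine isomorphism `x ↦ Ax + b` (with `A ∈ GLₙ(ℤ)`, `b ∈ ℤⁿ`)
maps `P` onto a Cayley sum `P₀ * ⋯ * P_r` of lattice polytopes `P₀, …, P_r ⊆ ℝ^(n-r)`;
(ii) some lattice projection `ℝⁿ → ℝʳ` maps `P` onto a unimodular `r`-simplex. -/
theorem cayley_sum_iff_lattice_projection (n r : ℕ) (hr : 1 ≤ r) (hrn : r ≤ n)
    (P : Set (Fin n → ℝ)) (hP : IsLatticePolytope P) :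
    (∃ (A : Matrix (Fin n) (Fin n) ℤ) (b : Fin n → ℤ), IsUnit A.det ∧
      ∃ Q : Fin (r + 1) → Set (Fin (n - r) → ℝ), (∀ k, IsLatticePolytope (Q k)) ∧
        (fun x => realMap A x + toRealVec b) '' P = cayleySum hrn Q) ↔
    (∃ B : Matrix (Fin r) (Fin n) ℤ,
      Surjective (B.mulVec : (Fin n → ℤ) → (Fin r → ℤ)) ∧
      IsUnimodularSimplex (realMap B '' P)) :=
  cayley_sum_iff_lattice_projection_general n r hrn P hP
end
end

section
/- Let n, r ≥ 1 and let f : ℂ[ℤⁿ] → ℂ[ℤʳ] be a ℂ-algebra homomorphism satisfying ε ∘ f = ε, where ε denotes the augmentation on each group algebra. Then there exists a unique group homomorphism π' : ℤⁿ → ℤʳ such that f(x^u) = x^{π'(u)} for every u ∈ ℤⁿ; that is, f is the ℂ-algebra homomorphism induced by π'. -/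
/-!
`f` maps the unit `x^u` to a unit of `ℂ[ℤʳ]`, and the units of a group algebra over a domain
of a group with two unique sums (such as `ℤʳ`) are the monomials `c x^a`: if `p q = 1` and the
supports of `p` and `q` are not both singletons, there are two distinct pairs of support elements,
each the only way to write its sum, which therefore gives a nonzero coefficient of `p q = 1`;
both sums are then `0`, contradicting uniqueness. The augmentation forces `c = 1`, and
multiplicativity of `f` makes `u ↦ a` additive.
-/

open Function

noncomputable section

/-- The augmentation `ε : ℂ[G] → ℂ`, the `ℂ`-algebra homomorphism sending every
`x^u` to `1` (i.e. sending `Σ c_u x^u` to `Σ c_u`). -/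
def aug (G : Type*) [AddCommMonoid G] : AddMonoidAlgebra ℂ G →ₐ[ℂ] ℂ :=
  AddMonoidAlgebra.lift ℂ ℂ G 1

open Finset

namespace AddMonoidAlgebra

variable {R A : Type*} [Semiring R]

theorem exists_eq_single_of_isUnit [NoZeroDivisors R] [Nontrivial R] [AddMonoid A]
    [TwoUniqueSums A] {p : R[A]} (hp : IsUnit p) : ∃ a r, p = single a r := by
  obtain ⟨q, hpq⟩ := hp.exists_right_inv
  have hq : q ≠ 0 := by
    rintro rfl
    simp at hpq
  have sum_eq_zero : ∀ {a b}, UniqueAdd p.coeff.support q.coeff.support a b →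
      a ∈ p.coeff.support → b ∈ q.coeff.support → a + b = 0 := by
    intro a b hab ha hb
    have hne : (p * q).coeff (a + b) ≠ 0 := by
      rw [coeff_mul_add_of_uniqueAdd hab]
      exact mul_ne_zero (Finsupp.mem_support_iff.mp ha) (Finsupp.mem_support_iff.mp hb)
    rw [hpq] at hne
    simpa using support_coeff_one_subset (Finsupp.mem_support_iff.mpr hne)
  have hcard : #p.coeff.support * #q.coeff.support ≤ 1 := by
    by_contra! h
    obtain ⟨⟨a₁, b₁⟩, h₁, ⟨a₂, b₂⟩, h₂, hne, hu₁, hu₂⟩ := TwoUniqueSums.uniqueAdd_of_one_lt_card h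
    rw [mem_product] at h₁ h₂
    refine hne (Prod.ext_iff.mpr (hu₁ h₂.1 h₂.2 ?_)).symm
    rw [sum_eq_zero hu₁ h₁.1 h₁.2, sum_eq_zero hu₂ h₂.1 h₂.2]
  have hq_card : 0 < #q.coeff.support := by
    simpa [Finsupp.support_nonempty_iff, coeff_eq_zero] using hq
  obtain ⟨a, r, h⟩ := Finsupp.card_support_le_one'.mp (by nlinarith : #p.coeff.support ≤ 1)
  exact ⟨a, r, coeff_injective h⟩

theorem existsUnique_addMonoidHom_of_forall_map_single_one [Nontrivial R] {G H F : Type*}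
    [AddMonoid G] [AddMonoid H] [FunLike F R[G] R[H]] [MonoidHomClass F R[G] R[H]] (f : F)
    (hf : ∀ u, ∃ a, f (single u 1) = single a 1) :
    ∃! π : G →+ H, ∀ u, f (single u 1) = single (π u) 1 := by
  choose π hπ using hf
  have single_inj : ∀ {a b : H}, (single a 1 : R[H]) = single b 1 → a = b :=
    (single_left_inj one_ne_zero).mp
  refine ⟨{ toFun := π, map_zero' := ?_, map_add' := fun u v => ?_ }, hπ, ?_⟩
  · apply single_inj
    rw [← hπ, ← one_def, map_one, one_def]
  · apply single_inj
    have hmul := map_mul f (single u 1) (single v 1)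
    rwa [single_mul_single, mul_one, hπ, hπ, hπ, single_mul_single, mul_one] at hmul
  · exact fun ψ hψ => AddMonoidHom.ext fun u => single_inj ((hψ u).symm.trans (hπ u))

end AddMonoidAlgebra

lemma aug_single {G : Type*} [AddCommMonoid G] (a : G) (c : ℂ) :
    aug G (AddMonoidAlgebra.single a c) = c := by
  simp [aug]

theorem algHom_is_induced_by_group_hom_general (n r : ℕ)
    (f : AddMonoidAlgebra ℂ (Fin n → ℤ) →ₐ[ℂ] AddMonoidAlgebra ℂ (Fin r → ℤ))
    (hf : (aug (Fin r → ℤ)).comp f = aug (Fin n → ℤ)) :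
    ∃! π' : (Fin n → ℤ) →+ (Fin r → ℤ),
      ∀ u : Fin n → ℤ,
        f (AddMonoidAlgebra.single u 1) = AddMonoidAlgebra.single (π' u) 1 := by
  refine AddMonoidAlgebra.existsUnique_addMonoidHom_of_forall_map_single_one f fun u => ?_
  have hunit : IsUnit (AddMonoidAlgebra.single u (1 : ℂ)) :=
    (Group.isUnit (Multiplicative.ofAdd u)).map (AddMonoidAlgebra.of ℂ _)
  obtain ⟨a, c, hfu⟩ := AddMonoidAlgebra.exists_eq_single_of_isUnit (hunit.map f)
  have hc : c = 1 := by
    simpa [hfu, aug_single] using DFunLike.congr_fun hf (AddMonoidAlgebra.single u 1)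
  exact ⟨a, hc ▸ hfu⟩

/-- Let `n, r ≥ 1` and let `f : ℂ[ℤⁿ] → ℂ[ℤʳ]` be a `ℂ`-algebra
homomorphism with `ε ∘ f = ε`. Then there is a unique group homomorphism
`π' : ℤⁿ → ℤʳ` with `f(x^u) = x^{π'(u)}` for all `u ∈ ℤⁿ`; that is, `f` is
induced by `π'`. -/
theorem algHom_is_induced_by_group_hom (n r : ℕ) (hn : 1 ≤ n) (hr : 1 ≤ r)
    (f : AddMonoidAlgebra ℂ (Fin n → ℤ) →ₐ[ℂ] AddMonoidAlgebra ℂ (Fin r → ℤ))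
    (hf : (aug (Fin r → ℤ)).comp f = aug (Fin n → ℤ)) :
    ∃! π' : (Fin n → ℤ) →+ (Fin r → ℤ),
      ∀ u : Fin n → ℤ,
        f (AddMonoidAlgebra.single u 1) = AddMonoidAlgebra.single (π' u) 1 :=
  algHom_is_induced_by_group_hom_general n r f hf
end
end
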